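/- Let q ≥ 2 be an integer and let n be a positive integer with n ≤ q² + 2q − 2. Let T = C_{−q} = {0, ∞} ∪ {k : k ∈ ℤ, 1 ≤ |k| ≤ q−1} ∪ {1/k : k ∈ ℤ, 1 ≤ |k| ≤ q−1} ∪ {−1/q, −q}. Then any two functions f, g : ℤ² → ℝ that are T-clue-equivalent on I_{n,n} agree at every point of I_{n,n}; equivalently, every solvable n × n RK puzzle with clue slopes T has a unique solution. -/

import Mathlib

open Classical

/-- A slope is an element of `ℚ ∪ {∞}`; `none` denotes `∞`. -/
abbrev Slope := Option ℚ

/-- The clue of `f` along the line of slope `s` (vertical line `x = c` when `s = ∞ = none`,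
and the line `y = r·x + c` when `s = some r`), with respect to the grid
`I_{n,m} = {1,…,n} × {1,…,m} ⊆ ℤ²`: the sum of `f` over the grid points lying on the line. -/
noncomputable def clueSum (n m : ℕ) (s : Slope) (c : ℝ) (f : ℤ × ℤ → ℝ) : ℝ :=
  ∑ p ∈ (Finset.Icc (1 : ℤ) n ×ˢ Finset.Icc (1 : ℤ) m).filter
      (fun p => match s with
        | none => (p.1 : ℝ) = c
        | some r => (p.2 : ℝ) = (r : ℝ) * (p.1 : ℝ) + c),
    f p

/-- `f` and `g` are `T`-clue-equivalent on `I_{n,m}`: for every slope `s ∈ T` and every line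
of slope `s`, the clues of `f` and `g` along that line agree. -/
def ClueEquiv (n m : ℕ) (T : Set Slope) (f g : ℤ × ℤ → ℝ) : Prop :=
  ∀ s ∈ T, ∀ c : ℝ, clueSum n m s c f = clueSum n m s c g

/-- The entry `p ∈ I_{n,m}` is uniquely solvable with respect to the slope set `T`. -/
def UniqSolv (n m : ℕ) (T : Set Slope) (p : ℤ × ℤ) : Prop :=
  ∀ f g : ℤ × ℤ → ℝ, ClueEquiv n m T f g → f p = g p

/-- The slope set `C_{−q} = {0, ∞} ∪ {±k, ±1/k : 1 ≤ k ≤ q−1} ∪ {−1/q, −q}`. -/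
def CnegQ (q : ℕ) : Set Slope :=
  ({some 0, none} ∪
    {s | ∃ k : ℤ, 1 ≤ |k| ∧ |k| ≤ (q : ℤ) - 1 ∧ (s = some (k : ℚ) ∨ s = some (1 / (k : ℚ)))}) ∪
  {some (-(1 / (q : ℚ))), some (-(q : ℚ))}
/-!
Let `h = f - g`, whose clues along every slope of `C_{−q}` vanish, and suppose its support `S` in
the grid is nonempty. For a finite slope `r`, the lowest line of slope `r` meeting `S` has zero
clue, so it meets `S` in at least two points; their `x`-coordinates differ by a multiple of the
denominator of `r`. These lower-hull edges of `S` for distinct slopes project to `x`-intervals with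
disjoint interiors inside `[1, n]`, so the denominators of the finite slopes sum to at most
`n - 1`. For `C_{−q}` that sum is `2q + (q² − 2)`.
-/

open Finset

noncomputable def grid (n m : ℕ) : Finset (ℤ × ℤ) := Icc (1 : ℤ) n ×ˢ Icc (1 : ℤ) m

lemma mem_grid {n m : ℕ} {p : ℤ × ℤ} :
    p ∈ grid n m ↔ (1 ≤ p.1 ∧ p.1 ≤ n) ∧ 1 ≤ p.2 ∧ p.2 ≤ m := by
  simp only [grid, mem_product, mem_Icc]

noncomputable def gridSupport (n m : ℕ) (h : ℤ × ℤ → ℝ) : Finset (ℤ × ℤ) :=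
  (grid n m).filter (h · ≠ 0)

lemma mem_gridSupport {n m : ℕ} {h : ℤ × ℤ → ℝ} {p : ℤ × ℤ} :
    p ∈ gridSupport n m h ↔ p ∈ grid n m ∧ h p ≠ 0 :=
  mem_filter

/-- Lines of slope `r` are the level sets of `height r`. -/
def height (r : ℚ) (p : ℤ × ℤ) : ℚ := r * p.1 - p.2

lemma den_dvd_of_height_eq {r : ℚ} {p p' : ℤ × ℤ} (h : height r p = height r p') :
    (r.den : ℤ) ∣ p'.1 - p.1 := by
  rcases eq_or_ne (p'.1 - p.1) 0 with hx | hx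
  · simp [hx]
  have hr : r = ((p'.2 - p.2 : ℤ) : ℚ) / ((p'.1 - p.1 : ℤ) : ℚ) := by
    rw [eq_div_iff (by exact_mod_cast hx)]
    unfold height at h
    push_cast
    linarith
  rw [hr, ← Rat.divInt_eq_div]
  exact Rat.den_dvd _ _

lemma clueSum_some_neg_height (n m : ℕ) (r : ℚ) (P : ℤ × ℤ) (h : ℤ × ℤ → ℝ) :
    clueSum n m (some r) ((-height r P : ℚ) : ℝ) h =
      ∑ p ∈ (grid n m).filter (fun p => height r p = height r P), h p := by
  unfold clueSum
  congr 1
  refine filter_congr fun p _ => ?_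
  rw [← Rat.cast_inj (α := ℝ)]
  simp only [height]
  push_cast
  constructor <;> intro <;> linarith

lemma clueSum_sub (n m : ℕ) (s : Slope) (c : ℝ) (f g : ℤ × ℤ → ℝ) :
    clueSum n m s c (f - g) = clueSum n m s c f - clueSum n m s c g :=
  sum_sub_distrib ..

section LowerHull

variable {S : Finset (ℤ × ℤ)} {r r' : ℚ} {P Q P' Q' : ℤ × ℤ}

structure IsLowerHullEdge (S : Finset (ℤ × ℤ)) (r : ℚ) (P Q : ℤ × ℤ) : Prop where
  left_mem : P ∈ S
  right_mem : Q ∈ S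
  lt : P.1 < Q.1
  height_eq : height r Q = height r P
  height_le : ∀ p ∈ S, height r p ≤ height r P

lemma IsLowerHullEdge.den_le (e : IsLowerHullEdge S r P Q) : (r.den : ℤ) ≤ Q.1 - P.1 :=
  Int.le_of_dvd (by linarith [e.lt]) (den_dvd_of_height_eq e.height_eq.symm)

lemma IsLowerHullEdge.right_le_left_of_lt (e : IsLowerHullEdge S r P Q)
    (e' : IsLowerHullEdge S r' P' Q') (hr : r' < r) : Q'.1 ≤ P.1 := by
  have h₁ := e.height_le Q' e'.right_mem
  have h₂ := e'.height_le P e.left_mem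
  have h₃ := e'.height_eq
  simp only [height] at h₁ h₂ h₃
  by_contra! hlt
  have : (0 : ℚ) < (r - r') * (Q'.1 - P.1) :=
    mul_pos (by linarith) (by simpa using (Int.cast_lt (R := ℚ)).mpr hlt)
  linarith

lemma IsLowerHullEdge.disjoint_Ico (e : IsLowerHullEdge S r P Q)
    (e' : IsLowerHullEdge S r' P' Q') (hr : r ≠ r') :
    Disjoint (Ico P.1 Q.1) (Ico P'.1 Q'.1) := by
  have hle : Q.1 ≤ P'.1 ∨ Q'.1 ≤ P.1 := by
    rcases hr.lt_or_gt with hr | hr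
    · exact Or.inl (e'.right_le_left_of_lt e hr)
    · exact Or.inr (e.right_le_left_of_lt e' hr)
  rw [disjoint_left]
  intro x hx hx'
  rw [mem_Ico] at hx hx'
  omega

lemma sum_toNat_le_of_pairwiseDisjoint_Ico {ι : Type*} (R : Finset ι) (a b : ι → ℤ) (lo hi : ℤ)
    (hab : ∀ i ∈ R, lo ≤ a i ∧ b i ≤ hi)
    (hdisj : (R : Set ι).PairwiseDisjoint fun i => Ico (a i) (b i)) :
    ∑ i ∈ R, (b i - a i).toNat ≤ (hi - lo).toNat := by
  simp only [← Int.card_Ico]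
  rw [← card_biUnion hdisj]
  refine card_le_card fun x hx => ?_
  obtain ⟨i, hi, hx⟩ := mem_biUnion.mp hx
  rw [mem_Ico] at hx ⊢
  have := hab i hi
  omega

lemma sum_den_le_of_isLowerHullEdge (R : Finset ℚ) (P Q : ℚ → ℤ × ℤ) (lo hi : ℤ)
    (hS : ∀ p ∈ S, lo ≤ p.1 ∧ p.1 ≤ hi) (he : ∀ r ∈ R, IsLowerHullEdge S r (P r) (Q r)) :
    ∑ r ∈ R, r.den ≤ (hi - lo).toNat := by
  calc ∑ r ∈ R, r.den ≤ ∑ r ∈ R, ((Q r).1 - (P r).1).toNat :=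
        sum_le_sum fun r hr => by have := (he r hr).den_le; omega
    _ ≤ (hi - lo).toNat := by
        refine sum_toNat_le_of_pairwiseDisjoint_Ico R _ _ lo hi (fun r hr => ?_)
          fun r hr r' hr' hrr => (he r hr).disjoint_Ico (he r' hr') hrr
        have := hS _ (he r hr).left_mem
        have := hS _ (he r hr).right_mem
        omega

end LowerHull

lemma exists_ne_height_eq (n m : ℕ) (r : ℚ) (h : ℤ × ℤ → ℝ)
    (hclue : ∀ c, clueSum n m (some r) c h = 0) {P : ℤ × ℤ}
    (hP : P ∈ gridSupport n m h) :
    ∃ Q ∈ gridSupport n m h, Q ≠ P ∧ height r Q = height r P := by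
  by_contra! hQ
  rw [mem_gridSupport] at hP
  have hline := clueSum_some_neg_height n m r P h
  have hPl : P ∈ (grid n m).filter (fun p => height r p = height r P) :=
    mem_filter.mpr ⟨hP.1, rfl⟩
  rw [hclue, sum_eq_single_of_mem P hPl] at hline
  · exact hP.2 hline.symm
  intro Q hQl hQP
  rw [mem_filter] at hQl
  by_contra hQ0
  exact hQ Q (mem_gridSupport.mpr ⟨hQl.1, hQ0⟩) hQP hQl.2

lemma exists_isLowerHullEdge (n m : ℕ) (r : ℚ) (h : ℤ × ℤ → ℝ)
    (hclue : ∀ c, clueSum n m (some r) c h = 0)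
    (hS : (gridSupport n m h).Nonempty) :
    ∃ P Q, IsLowerHullEdge (gridSupport n m h) r P Q := by
  obtain ⟨P, hP, hmax⟩ := exists_max_image _ (height r) hS
  obtain ⟨Q, hQ, hQP, hPQ⟩ := exists_ne_height_eq n m r h hclue hP
  have hx : Q.1 ≠ P.1 := fun hx => hQP <| Prod.ext hx <| by
    simp only [height, hx] at hPQ
    exact_mod_cast (sub_right_inj.mp hPQ)
  rcases hx.lt_or_gt with hlt | hlt
  · exact ⟨Q, P, ⟨hQ, hP, hlt, hPQ.symm, fun p hp => hPQ ▸ hmax p hp⟩⟩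
  · exact ⟨P, Q, ⟨hP, hQ, hlt, hPQ, hmax⟩⟩

theorem uniqSolv_of_le_sum_den (n m : ℕ) (T : Set Slope) (R : Finset ℚ)
    (hRT : ∀ r ∈ R, some r ∈ T) (hR : n ≤ ∑ r ∈ R, r.den) {p : ℤ × ℤ}
    (hp : p ∈ grid n m) : UniqSolv n m T p := by
  intro f g hfg
  by_contra hne
  set S := gridSupport n m (f - g)
  have hpS : p ∈ S := mem_gridSupport.mpr ⟨hp, sub_ne_zero.mpr hne⟩
  have hclue : ∀ r ∈ R, ∀ c, clueSum n m (some r) c (f - g) = 0 := fun r hr c => by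
    rw [clueSum_sub, hfg _ (hRT r hr) c, sub_self]
  choose! P Q he using fun r hr => exists_isLowerHullEdge n m r _ (hclue r hr) ⟨p, hpS⟩
  have hSx : ∀ s ∈ S, 1 ≤ s.1 ∧ s.1 ≤ n := fun s hs =>
    (mem_grid.mp (mem_gridSupport.mp hs).1).1
  have hsum := sum_den_le_of_isLowerHullEdge R P Q 1 n hSx he
  have hpx := hSx p hpS
  omega

noncomputable def cnegQFiniteSlopes (q : ℕ) : Finset ℚ :=
  (Icc (-(q : ℤ)) (q - 1)).image (fun k : ℤ => (k : ℚ)) ∪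
    (Icc (-(q : ℤ)) (q - 1) \ {-1, 0, 1}).image (fun k : ℤ => (k : ℚ)⁻¹)

lemma some_mem_CnegQ_of_mem_cnegQFiniteSlopes {q : ℕ} {r : ℚ} (hr : r ∈ cnegQFiniteSlopes q) :
    some r ∈ CnegQ q := by
  simp only [cnegQFiniteSlopes, mem_union, mem_image, mem_sdiff,
    mem_Icc, mem_insert, mem_singleton] at hr
  simp only [CnegQ, Set.mem_union, Set.mem_insert_iff, Set.mem_singleton_iff, Set.mem_ofPred_eq,
    Option.some.injEq]
  rcases hr with ⟨k, ⟨hk₁, hk₂⟩, rfl⟩ | ⟨k, ⟨⟨hk₁, hk₂⟩, hk₃⟩, rfl⟩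
  · rcases eq_or_ne k (-q) with rfl | hkq
    · right; right; push_cast; rfl
    rcases eq_or_ne k 0 with rfl | hk0
    · left; left; left; simp
    left; right
    exact ⟨k, by rw [le_abs]; omega, by rw [abs_le]; omega, Or.inl rfl⟩
  · rcases eq_or_ne k (-q) with rfl | hkq
    · right; left; push_cast; rw [inv_neg, one_div]
    left; right
    exact ⟨k, by rw [le_abs]; omega, by rw [abs_le]; omega, Or.inr (one_div _).symm⟩

lemma sum_natAbs_Icc_neg (q : ℕ) : ∑ k ∈ Icc (-(q : ℤ)) (q - 1), k.natAbs = q ^ 2 := by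
  induction q with
  | zero => simp
  | succ q ih =>
    have hIcc : Icc (-((q + 1 : ℕ) : ℤ)) ((q + 1 : ℕ) - 1) =
        insert (-(q + 1 : ℤ)) (insert (q : ℤ) (Icc (-(q : ℤ)) (q - 1))) := by
      ext k
      simp only [mem_Icc, mem_insert]
      omega
    rw [hIcc, sum_insert (by simp; omega), sum_insert (by simp), ih,
      show (-(q + 1 : ℤ)).natAbs = q + 1 by omega, Int.natAbs_natCast]
    ring

lemma sum_natAbs_Icc_neg_sdiff {q : ℕ} (hq : 2 ≤ q) :
    ∑ k ∈ Icc (-(q : ℤ)) (q - 1) \ {-1, 0, 1}, k.natAbs = q ^ 2 - 2 := by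
  have hsub : ({-1, 0, 1} : Finset ℤ) ⊆ Icc (-(q : ℤ)) (q - 1) := by
    intro k hk
    simp only [mem_insert, mem_singleton] at hk
    rw [mem_Icc]
    omega
  have := sum_sdiff hsub (f := Int.natAbs)
  rw [sum_natAbs_Icc_neg, show ∑ k ∈ ({-1, 0, 1} : Finset ℤ), k.natAbs = 2 by rfl] at this
  omega

lemma sum_den_cnegQFiniteSlopes {q : ℕ} (hq : 2 ≤ q) :
    ∑ r ∈ cnegQFiniteSlopes q, r.den = q ^ 2 + 2 * q - 2 := by
  have hden_int : ∀ k : ℤ, (k : ℚ).den = 1 := Rat.den_intCast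
  have hden_inv : ∀ k ∈ Icc (-(q : ℤ)) (q - 1) \ {-1, 0, 1}, (k : ℚ)⁻¹.den = k.natAbs :=
    fun k hk => by
      rw [Rat.inv_intCast_den, if_neg]
      simp only [mem_sdiff, mem_insert, mem_singleton] at hk
      omega
  have hdisj : Disjoint ((Icc (-(q : ℤ)) (q - 1)).image (fun k : ℤ => (k : ℚ)))
      ((Icc (-(q : ℤ)) (q - 1) \ {-1, 0, 1}).image (fun k : ℤ => (k : ℚ)⁻¹)) := by
    simp only [disjoint_left, mem_image]
    rintro _ ⟨k, -, rfl⟩ ⟨k', hk', hkk'⟩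
    have := hden_inv k' hk'
    simp only [mem_sdiff, mem_insert, mem_singleton] at hk'
    rw [hkk', hden_int] at this
    omega
  rw [cnegQFiniteSlopes, sum_union hdisj,
    sum_image Int.cast_injective.injOn,
    sum_image (f := Rat.den) (g := fun k : ℤ => (k : ℚ)⁻¹)
      (inv_injective.comp Int.cast_injective).injOn,
    sum_congr rfl fun k _ => hden_int k, sum_congr rfl hden_inv, sum_natAbs_Icc_neg_sdiff hq]
  simp only [sum_const, Int.card_Icc, smul_eq_mul, mul_one]
  have : 4 ≤ q ^ 2 := by nlinarith
  omega

theorem rk_unique_CnegQ_general (q : ℕ) (hq : 2 ≤ q) (n : ℕ)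
    (hnq : n ≤ q ^ 2 + 2 * q - 2) :
    ∀ f g : ℤ × ℤ → ℝ, ClueEquiv n n (CnegQ q) f g →
      ∀ p : ℤ × ℤ, 1 ≤ p.1 → p.1 ≤ (n : ℤ) → 1 ≤ p.2 → p.2 ≤ (n : ℤ) → f p = g p := by
  intro f g hfg p hp₁ hp₂ hp₃ hp₄
  have hp : p ∈ grid n n :=
    mem_grid.mpr ⟨⟨hp₁, hp₂⟩, hp₃, hp₄⟩
  refine uniqSolv_of_le_sum_den n n (CnegQ q) (cnegQFiniteSlopes q)
    (fun _ => some_mem_CnegQ_of_mem_cnegQFiniteSlopes) ?_ hp f g hfg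
  rwa [sum_den_cnegQFiniteSlopes hq]

/-- if `q ≥ 2` and `n ≤ q² + 2q − 2`, then every entry of `I_{n,n}` is
uniquely solvable with respect to `C_{−q}`; equivalently every solvable `n × n` RK puzzle
with clue slopes `C_{−q}` has a unique solution. -/
theorem rk_unique_CnegQ (q : ℕ) (hq : 2 ≤ q) (n : ℕ) (hn : 0 < n)
    (hnq : n ≤ q ^ 2 + 2 * q - 2) :
    ∀ f g : ℤ × ℤ → ℝ, ClueEquiv n n (CnegQ q) f g →
      ∀ p : ℤ × ℤ, 1 ≤ p.1 → p.1 ≤ (n : ℤ) → 1 ≤ p.2 → p.2 ≤ (n : ℤ) → f p = g p :=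
  rk_unique_CnegQ_general q hq n hnq
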